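/- If f is holomorphic on the unit disk with nonvanishing derivative and there exists a holomorphic φ : 𝔻 → 𝔻 such that f''(z)/f'(z) = 2(1-α)·φ(z)/(1-zφ(z)) on the disk (0 ≤ α < 1), then the Schwarzian derivative satisfies Sf(z) = 2(1-α)·(φ'(z) + α·φ(z)²)/(1-zφ(z))². -/

import Mathlib

/-! Write `p = f''/f'`. Then `f'' = p f'` near `z`, so `f''' = (p' + p²) f'` and `Sf = p' - p²/2`.
For `p = c φ / (1 - zφ)` with `c = 2(1 - α)` the quotient rule gives `p' = c (φ' + φ²) / (1 - zφ)²`,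
and since `c / 2 = 1 - α` the term `p²/2` cancels all but `α φ²` of the `φ²`. The denominator
`1 - zφ` does not vanish on the disk because `|zφ(z)| < 1`. -/

open Filter Topology

noncomputable def schwarzian {𝕜 : Type*} [NontriviallyNormedField 𝕜] (f : 𝕜 → 𝕜) (z : 𝕜) : 𝕜 :=
  deriv (deriv (deriv f)) z / deriv f z - 3 / 2 * (deriv (deriv f) z / deriv f z) ^ 2

lemma one_sub_mul_ne_zero_of_norm_lt_one {R : Type*} [NormedRing R] [NormOneClass R] {a b : R}
    (ha : ‖a‖ < 1) (hb : ‖b‖ < 1) : 1 - a * b ≠ 0 := by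
  intro h
  have hab : ‖a * b‖ < 1 :=
    (norm_mul_le a b).trans_lt (mul_lt_one_of_nonneg_of_lt_one_left (norm_nonneg a) ha hb.le)
  rw [← sub_eq_zero.mp h, norm_one] at hab
  exact lt_irrefl 1 hab

section Schwarzian

variable {𝕜 : Type*} [NontriviallyNormedField 𝕜] {f p : 𝕜 → 𝕜} {z : 𝕜}

lemma deriv_deriv_deriv_eq_of_eventuallyEq_mul
    (h : deriv (deriv f) =ᶠ[𝓝 z] fun w ↦ p w * deriv f w)
    (hp : DifferentiableAt 𝕜 p z) (hf : DifferentiableAt 𝕜 (deriv f) z) :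
    deriv (deriv (deriv f)) z = (deriv p z + p z ^ 2) * deriv f z := by
  rw [h.deriv_eq, deriv_fun_mul hp hf, h.eq_of_nhds]
  ring

lemma schwarzian_eq_of_eventually_div_eq [CharZero 𝕜]
    (hp : ∀ᶠ w in 𝓝 z, deriv (deriv f) w / deriv f w = p w)
    (hf' : ∀ᶠ w in 𝓝 z, deriv f w ≠ 0)
    (hpd : DifferentiableAt 𝕜 p z) (hfd : DifferentiableAt 𝕜 (deriv f) z) :
    schwarzian f z = deriv p z - p z ^ 2 / 2 := by
  have hmul : deriv (deriv f) =ᶠ[𝓝 z] fun w ↦ p w * deriv f w :=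
    (hp.and hf').mono fun w ⟨hpw, hfw⟩ ↦ by simp only [← hpw, div_mul_cancel₀ _ hfw]
  have hfz : deriv f z ≠ 0 := hf'.self_of_nhds
  rw [schwarzian, deriv_deriv_deriv_eq_of_eventuallyEq_mul hmul hpd hfd, hp.self_of_nhds,
    mul_div_cancel_right₀ _ hfz]
  ring

lemma hasDerivAt_const_mul_div_one_sub_mul_self {φ : 𝕜 → 𝕜} {φ' : 𝕜} (c : 𝕜)
    (hφ : HasDerivAt φ φ' z) (hz : 1 - z * φ z ≠ 0) :
    HasDerivAt (fun w ↦ c * φ w / (1 - w * φ w)) (c * (φ' + φ z ^ 2) / (1 - z * φ z) ^ 2) z := by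
  refine ((hφ.const_mul c).fun_div
    ((hasDerivAt_id' (x := z)).fun_mul hφ |>.const_sub 1) hz).congr_deriv ?_
  ring

end Schwarzian

theorem schwarzian_formula_from_subordination_general
    (f : ℂ → ℂ) (α : ℝ)
    (hf : DifferentiableOn ℂ f (Metric.ball 0 1))
    (hf' : ∀ z ∈ Metric.ball (0:ℂ) 1, deriv f z ≠ 0)
    (φ : ℂ → ℂ)
    (hφ : DifferentiableOn ℂ φ (Metric.ball 0 1))
    (hφ1 : ∀ z ∈ Metric.ball (0:ℂ) 1, ‖φ z‖ < 1)
    (hsub : ∀ z ∈ Metric.ball (0:ℂ) 1,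
      deriv (deriv f) z / deriv f z = 2 * (1 - (α : ℂ)) * φ z / (1 - z * φ z)) :
    ∀ z ∈ Metric.ball (0:ℂ) 1,
      deriv (deriv (deriv f)) z / deriv f z
          - 3 / 2 * (deriv (deriv f) z / deriv f z) ^ 2
        = 2 * (1 - (α : ℂ)) * (deriv φ z + (α : ℂ) * (φ z) ^ 2) / (1 - z * φ z) ^ 2 := by
  intro z hz
  have hnhds : Metric.ball (0 : ℂ) 1 ∈ 𝓝 z := Metric.isOpen_ball.mem_nhds hz
  have hden : 1 - z * φ z ≠ 0 :=
    one_sub_mul_ne_zero_of_norm_lt_one (by simpa using hz) (hφ1 z hz)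
  have hp := hasDerivAt_const_mul_div_one_sub_mul_self (2 * (1 - (α : ℂ)))
    (hφ.differentiableAt hnhds).hasDerivAt hden
  change schwarzian f z = _
  rw [schwarzian_eq_of_eventually_div_eq (eventually_of_mem hnhds hsub)
    (eventually_of_mem hnhds hf') hp.differentiableAt
    ((hf.deriv Metric.isOpen_ball).differentiableAt hnhds), hp.deriv]
  field_simp
  ring

theorem schwarzian_formula_from_subordination
    (f : ℂ → ℂ) (α : ℝ) (hα0 : 0 ≤ α) (hα1 : α < 1)
    (hf : DifferentiableOn ℂ f (Metric.ball 0 1))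
    (hf' : ∀ z ∈ Metric.ball (0:ℂ) 1, deriv f z ≠ 0)
    (φ : ℂ → ℂ)
    (hφ : DifferentiableOn ℂ φ (Metric.ball 0 1))
    (hφ1 : ∀ z ∈ Metric.ball (0:ℂ) 1, ‖φ z‖ < 1)
    (hsub : ∀ z ∈ Metric.ball (0:ℂ) 1,
      deriv (deriv f) z / deriv f z = 2 * (1 - (α : ℂ)) * φ z / (1 - z * φ z)) :
    ∀ z ∈ Metric.ball (0:ℂ) 1,
      deriv (deriv (deriv f)) z / deriv f z
          - 3 / 2 * (deriv (deriv f) z / deriv f z) ^ 2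
        = 2 * (1 - (α : ℂ)) * (deriv φ z + (α : ℂ) * (φ z) ^ 2) / (1 - z * φ z) ^ 2 :=
  schwarzian_formula_from_subordination_general f α hf hf' φ hφ hφ1 hsub
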